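/- arXiv:2203.12158 — 2 statements merged into one kernel-verified Lean document; each statement's English description precedes it below -/
import Mathlib

section
/- Let G be a group acting transitively on a set X and let x ∈ X. Then the stabilizer G_x is not properly contained in any of its conjugates (i.e., for all g ∈ G, G_x ⊆ gG_xg^{-1} implies G_x = gG_xg^{-1}) if and only if every G-equivariant transformation of X is bijective, i.e., End_G(X) = Aut_G(X). -/
/-! For a transitive action an equivariant map `τ : X → X` is determined by `y = τ x`, and every
`y` with `G_x ≤ G_y` occurs. Such a `τ` is always surjective, and it is injective exactly when
`G_y ≤ G_x`. As `G_{g • x} = g G_x g⁻¹`, both sides of the equivalence say that `G_x ≤ G_{g • x}`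
forces equality. -/

/-- The monoid of all `G`-equivariant transformations of `X`, as a submonoid of
`Function.End X` (composition of functions). -/
def gEnd (G X : Type*) [Group G] [MulAction G X] : Submonoid (Function.End X) where
  carrier := {f | ∀ (g : G) (x : X), f (g • x) = g • f x}
  one_mem' := fun _ _ => rfl
  mul_mem' := fun {f₁ f₂} h₁ h₂ g x => by
    show f₁ (f₂ (g • x)) = g • f₁ (f₂ x)
    rw [h₂, h₁]

/-- The group of all bijective `G`-equivariant transformations of `X`, as a subgroup of
`Equiv.Perm X`. -/
def gAut (G X : Type*) [Group G] [MulAction G X] : Subgroup (Equiv.Perm X) where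
  carrier := {f | ∀ (g : G) (x : X), f (g • x) = g • f x}
  one_mem' := fun _ _ => rfl
  mul_mem' := fun {f₁ f₂} h₁ h₂ g x => by
    show f₁ (f₂ (g • x)) = g • f₁ (f₂ x)
    rw [h₂, h₁]
  inv_mem' := fun {f} hf g x => f.injective (by
    rw [Equiv.Perm.coe_inv, Equiv.apply_symm_apply, hf, Equiv.apply_symm_apply])

/-- The conjugate subgroup `g K g⁻¹`. -/
def conjSub {G : Type*} [Group G] (g : G) (K : Subgroup G) : Subgroup G :=
  Subgroup.map (MulAut.conj g).toMonoidHom K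

namespace MulAction

variable {G X Y : Type*} [Group G] [MulAction G X] [MulAction G Y]

lemma stabilizer_le_stabilizer_apply (f : X →[G] Y) (x : X) :
    stabilizer G x ≤ stabilizer G (f x) := fun g hg => by
  rw [mem_stabilizer_iff, ← map_smul, mem_stabilizer_iff.mp hg]

lemma smul_eq_smul_of_stabilizer_le {x : X} {y : Y} (hle : stabilizer G x ≤ stabilizer G y)
    {g g' : G} (h : g • x = g' • x) : g • y = g' • y := by
  have hmem : g'⁻¹ * g ∈ stabilizer G x := by rw [mem_stabilizer_iff, mul_smul, h, inv_smul_smul]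
  rw [← inv_smul_eq_iff, ← mul_smul]
  exact hle hmem

lemma conjSub_stabilizer (g : G) (x : X) :
    conjSub g (stabilizer G x) = stabilizer G (g • x) :=
  (stabilizer_smul_eq_stabilizer_map_conj g x).symm

variable [IsPretransitive G X]

noncomputable def homOfStabilizerLE {x : X} {y : Y} (hle : stabilizer G x ≤ stabilizer G y) :
    X →[G] Y where
  toFun z := (exists_smul_eq G x z).choose • y
  map_smul' g z := by
    rw [id, smul_smul]
    exact smul_eq_smul_of_stabilizer_le hle <| by
      rw [(exists_smul_eq G x _).choose_spec, mul_smul, (exists_smul_eq G x z).choose_spec]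

lemma homOfStabilizerLE_apply_smul {x : X} {y : Y} (hle : stabilizer G x ≤ stabilizer G y)
    (g : G) : homOfStabilizerLE hle (g • x) = g • y :=
  smul_eq_smul_of_stabilizer_le hle (exists_smul_eq G x (g • x)).choose_spec

lemma homOfStabilizerLE_apply_self {x : X} {y : Y} (hle : stabilizer G x ≤ stabilizer G y) :
    homOfStabilizerLE hle x = y := by
  simpa using homOfStabilizerLE_apply_smul hle 1

lemma injective_iff_stabilizer_apply_le (f : X →[G] Y) (x : X) :
    Function.Injective f ↔ stabilizer G (f x) ≤ stabilizer G x := by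
  refine ⟨fun hf g hg => hf (by rw [map_smul, mem_stabilizer_iff.mp hg]), fun hle z z' h => ?_⟩
  obtain ⟨g, rfl⟩ := exists_smul_eq G x z
  obtain ⟨g', rfl⟩ := exists_smul_eq G x z'
  rw [map_smul, map_smul] at h
  exact smul_eq_smul_of_stabilizer_le hle h

end MulAction

lemma MulActionHom.surjective_of_isPretransitive {G X Y : Type*} [Group G] [MulAction G X]
    [MulAction G Y] [MulAction.IsPretransitive G Y] (f : X →[G] Y) (x : X) :
    Function.Surjective f := fun y => by
  obtain ⟨g, rfl⟩ := MulAction.exists_smul_eq G (f x) y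
  exact ⟨g • x, map_smul f g x⟩

open MulAction in
/-- For a transitive action, `G_x` is not properly contained in any of
its conjugates iff every `G`-equivariant transformation of `X` is bijective. -/
theorem stmt5 {G X : Type*} [Group G] [MulAction G X] [MulAction.IsPretransitive G X]
    (x : X) :
    (∀ g : G, MulAction.stabilizer G x ≤ conjSub g (MulAction.stabilizer G x) →
        MulAction.stabilizer G x = conjSub g (MulAction.stabilizer G x)) ↔
      ∀ τ ∈ gEnd G X, Function.Bijective τ := by
  simp only [conjSub_stabilizer]
  constructor
  · intro hmax τ hτ
    let f : X →[G] X := ⟨τ, hτ⟩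
    obtain ⟨a, ha⟩ := exists_smul_eq G x (f x)
    have hle := stabilizer_le_stabilizer_apply f x
    rw [← ha] at hle
    refine ⟨(injective_iff_stabilizer_apply_le f x).2 ?_, f.surjective_of_isPretransitive x⟩
    rw [← ha, ← hmax a hle]
  · intro hbij g hle
    let f := homOfStabilizerLE hle
    have hinj := (hbij (⇑f : Function.End X) fun h z => map_smul f h z).1
    rw [injective_iff_stabilizer_apply_le f x, homOfStabilizerLE_apply_self] at hinj
    exact hle.antisymm hinj
end

section
/- Let G be a finite group acting on a finite set X, and let [H_1], …, [H_r] be the distinct conjugacy classes of point stabilizers. For each i let N_i = N_G(H_i), U(H_i) = {[G_x]_{N_i} : x ∈ X, H_i ≤ G_x} (the set of N_i-conjugacy classes of point stabilizers containing H_i), and let κ_G(X) be the number of indices i such that there is exactly one G-orbit whose point stabilizer is conjugate to H_i. Then the relative rank of End_G(X) modulo Aut_G(X) is at most Σ_{i=1}^r |U(H_i)| − κ_G(X). -/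
/-- The `N`-conjugacy class `[K]_N = {gKg⁻¹ : g ∈ N}` of a subgroup `K`. -/
def nConjClass {G : Type*} [Group G] (N K : Subgroup G) : Set (Subgroup G) :=
  {L | ∃ n ∈ N, L = conjSub n K}

/-- The set `O_[H]` of `G`-orbits of `X` whose point stabilizers are conjugate to `H`. -/
def classOrbits (G X : Type*) [Group G] [MulAction G X] (H : Subgroup G) : Set (Set X) :=
  {s | ∃ y : X, (∃ g : G, MulAction.stabilizer G y = conjSub g H) ∧ s = MulAction.orbit G y}

/-- The set `U(H)` of `N_G(H)`-conjugacy classes of point stabilizers of `X` containing `H`. -/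
def stabU (G X : Type*) [Group G] [MulAction G X] (H : Subgroup G) : Set (Set (Subgroup G)) :=
  {C | ∃ x : X, H ≤ MulAction.stabilizer G x ∧
    C = nConjClass (Subgroup.normalizer (H : Set G)) (MulAction.stabilizer G x)}

/-- The elements of `Aut_G(X)` viewed as a set of transformations of `X`. -/
def autSet (G X : Type*) [Group G] [MulAction G X] : Set (Function.End X) :=
  (fun e : Equiv.Perm X => (e : X → X)) '' (gAut G X)

/-- The relative rank `Rank(T : N)` of a submonoid `T` modulo a set `N`: the least
cardinality of a set `W` with `⟨W ∪ N⟩ = T`. -/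
noncomputable def relRank {M : Type*} [Monoid M] (T : Submonoid M) (N : Set M) : ℕ :=
  sInf {n : ℕ | ∃ W : Finset M, W.card = n ∧ Submonoid.closure (↑W ∪ N) = T}

/-!
Every equivariant map is a product of equivariant permutations and elementary maps
`orbitMap G y q` (`g • y ↦ g • q` on the orbit of `y`, the identity elsewhere, with `q`
outside that orbit): a non-surjective equivariant map misses a whole orbit, and peeling that
orbit off lowers the number of moved points. Conjugating by an equivariant permutation that
moves `y` and `q` simultaneously, an elementary map whose `y` has stabilizer type `[Hᵢ]`
becomes `orbitMap G xᵢ z` with `stabilizer G xᵢ = Hᵢ` and `z` depending only on an element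
of `U(Hᵢ)`. The class `[Hᵢ]` itself is never needed when a single orbit has type `[Hᵢ]`,
because `q` lies in a different orbit than `y`.
-/

open MulAction

section ConjSub

variable {G : Type*} [Group G]

lemma conjSub_one (K : Subgroup G) : conjSub 1 K = K := by
  simp only [conjSub, map_one]; exact Subgroup.map_id K

lemma conjSub_conjSub (g h : G) (K : Subgroup G) :
    conjSub g (conjSub h K) = conjSub (g * h) K := by
  simp only [conjSub, Subgroup.map_map, map_mul]
  rfl

lemma conjSub_eq_self_of_mem_normalizer {n : G} {K : Subgroup G}
    (hn : n ∈ Subgroup.normalizer (K : Set G)) : conjSub n K = K :=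
  Subgroup.mem_normalizer_iff_map_conj_eq.mp hn

lemma mem_nConjClass_self (N K : Subgroup G) : K ∈ nConjClass N K :=
  ⟨1, N.one_mem, (conjSub_one K).symm⟩

lemma conjSub_eq_self_of_le [Finite G] {g : G} {K : Subgroup G} (h : K ≤ conjSub g K) :
    conjSub g K = K :=
  (Subgroup.eq_of_le_of_card_ge h
    (Subgroup.card_map_of_injective (MulAut.conj g).injective).le).symm

lemma stabilizer_smul {X : Type*} [MulAction G X] (g : G) (x : X) :
    stabilizer G (g • x) = conjSub g (stabilizer G x) :=
  stabilizer_smul_eq_stabilizer_map_conj g x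

end ConjSub

section OrbitMap

variable {G X : Type*} [Group G] [MulAction G X]

lemma smul_mem_orbit_iff {x y : X} (g : G) : g • x ∈ orbit G y ↔ x ∈ orbit G y := by
  rw [← orbit_eq_iff, ← orbit_eq_iff, orbit_smul]

lemma stabilizer_le_stabilizer_apply {f : Function.End X} (hf : f ∈ gEnd G X) (x : X) :
    stabilizer G x ≤ stabilizer G (f x) := fun g hg => by
  rw [mem_stabilizer_iff] at hg ⊢
  rw [← hf g x, hg]

lemma stabilizer_apply_of_mem_gAut {e : Equiv.Perm X} (he : e ∈ gAut G X) (x : X) :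
    stabilizer G (e x) = stabilizer G x := by
  ext g
  rw [mem_stabilizer_iff, mem_stabilizer_iff, ← he g x, e.apply_eq_iff_eq]

lemma mem_autSet_of_bijective {f : Function.End X} (hf : f ∈ gEnd G X)
    (hb : Function.Bijective f) : f ∈ autSet G X :=
  ⟨Equiv.ofBijective f hb, hf, rfl⟩

lemma mem_autSet_of_mem_gAut {e : Equiv.Perm X} (he : e ∈ gAut G X) : ⇑e ∈ autSet G X :=
  ⟨e, he, rfl⟩

lemma autSet_subset_gEnd : autSet G X ⊆ gEnd G X := by
  rintro _ ⟨e, he, rfl⟩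
  exact he

lemma piecewise_orbit_mem_gEnd (y : X) [DecidablePred (· ∈ orbit G y)] {f₁ f₂ : X → X}
    (h₁ : f₁ ∈ gEnd G X) (h₂ : f₂ ∈ gEnd G X) :
    (orbit G y).piecewise f₁ f₂ ∈ gEnd G X := by
  intro g x
  by_cases hx : x ∈ orbit G y
  · have hgx : g • x ∈ orbit G y := (smul_mem_orbit_iff g).mpr hx
    rw [Set.piecewise_eq_of_mem _ _ _ hx, Set.piecewise_eq_of_mem _ _ _ hgx, h₁]
  · have hgx : g • x ∉ orbit G y := mt (smul_mem_orbit_iff g).mp hx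
    rw [Set.piecewise_eq_of_notMem _ _ _ hx, Set.piecewise_eq_of_notMem _ _ _ hgx, h₂]

open Classical in
/-- The equivariant map sending `g • y` to `g • q` and fixing every point outside the orbit of
`y`; it is well defined when `stabilizer G y ≤ stabilizer G q`. -/
noncomputable def orbitMap (G : Type*) {X : Type*} [Group G] [MulAction G X] (y q : X) :
    X → X := fun x =>
  if h : x ∈ orbit G y then (Classical.choose h) • q else x

lemma orbitMap_of_notMem {y q x : X} (hx : x ∉ orbit G y) : orbitMap G y q x = x :=
  dif_neg hx

lemma orbitMap_smul {y q : X} (hle : stabilizer G y ≤ stabilizer G q) (g : G) :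
    orbitMap G y q (g • y) = g • q := by
  have hx : g • y ∈ orbit G y := mem_orbit y g
  have hg : g⁻¹ * Classical.choose (mem_orbit_iff.mp hx) ∈ stabilizer G q := hle (by
    rw [mem_stabilizer_iff, mul_smul, Classical.choose_spec (mem_orbit_iff.mp hx), inv_smul_smul])
  rw [mem_stabilizer_iff, mul_smul, inv_smul_eq_iff] at hg
  exact (dif_pos hx).trans hg

lemma orbitMap_mem_gEnd {y q : X} (hle : stabilizer G y ≤ stabilizer G q) :
    orbitMap G y q ∈ gEnd G X := by
  intro g x
  by_cases hx : x ∈ orbit G y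
  · obtain ⟨c, rfl⟩ := mem_orbit_iff.mp hx
    rw [← mul_smul, orbitMap_smul hle, orbitMap_smul hle, mul_smul]
  · rw [orbitMap_of_notMem hx, orbitMap_of_notMem (mt (smul_mem_orbit_iff g).mp hx)]

lemma orbitMap_smul_smul {y q : X} (hle : stabilizer G y ≤ stabilizer G q) (c : G) :
    orbitMap G (c • y) (c • q) = orbitMap G y q := by
  have hle' : stabilizer G (c • y) ≤ stabilizer G (c • q) := by
    rw [stabilizer_smul, stabilizer_smul]
    exact Subgroup.map_mono hle
  funext x
  by_cases hx : x ∈ orbit G y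
  · obtain ⟨g, rfl⟩ := mem_orbit_iff.mp hx
    have : g • y = (g * c⁻¹) • c • y := by rw [smul_smul, inv_mul_cancel_right]
    rw [orbitMap_smul hle, this, orbitMap_smul hle', smul_smul, inv_mul_cancel_right]
  · rw [orbitMap_of_notMem hx, orbitMap_of_notMem (by rwa [orbit_smul])]

lemma orbitMap_conj {e : Equiv.Perm X} (he : e ∈ gAut G X) {y q : X}
    (hle : stabilizer G y ≤ stabilizer G q) :
    orbitMap G y q = ⇑e⁻¹ ∘ orbitMap G (e y) (e q) ∘ ⇑e := by
  have hle' : stabilizer G (e y) ≤ stabilizer G (e q) := by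
    rwa [stabilizer_apply_of_mem_gAut he, stabilizer_apply_of_mem_gAut he]
  funext x
  rw [Function.comp_apply, Function.comp_apply, Equiv.Perm.inv_def, Equiv.eq_symm_apply]
  by_cases hx : x ∈ orbit G y
  · obtain ⟨g, rfl⟩ := mem_orbit_iff.mp hx
    rw [orbitMap_smul hle, he, he, orbitMap_smul hle']
  · have hex : e x ∉ orbit G (e y) := by
      intro h
      obtain ⟨g, hg⟩ := mem_orbit_iff.mp h
      exact hx (mem_orbit_iff.mpr ⟨g, e.injective (by rw [he, hg])⟩)
    rw [orbitMap_of_notMem hx, orbitMap_of_notMem hex]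

end OrbitMap

section OrbitSwap

variable {G X : Type*} [Group G] [MulAction G X]

open Classical in
/-- For `stabilizer G u = stabilizer G v`: the equivariant map exchanging `g • u` and `g • v`
when the two orbits differ, and sending `g • u` to `g • v` when they coincide. -/
noncomputable def orbitSwap (G : Type*) {X : Type*} [Group G] [MulAction G X] (u v : X) :
    X → X :=
  (orbit G u).piecewise (orbitMap G u v) (orbitMap G v u)

lemma orbitSwap_smul {u v : X} (h : stabilizer G u = stabilizer G v) (g : G) :
    orbitSwap G u v (g • u) = g • v := by
  classical
  rw [orbitSwap, Set.piecewise_eq_of_mem _ _ _ (mem_orbit u g), orbitMap_smul h.le]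

lemma orbitSwap_of_notMem {u v x : X} (hu : x ∉ orbit G u) (hv : x ∉ orbit G v) :
    orbitSwap G u v x = x := by
  classical
  rw [orbitSwap, Set.piecewise_eq_of_notMem _ _ _ hu, orbitMap_of_notMem hv]

lemma orbitSwap_orbitSwap {u v : X} (h : stabilizer G u = stabilizer G v) (x : X) :
    orbitSwap G u v (orbitSwap G v u x) = x := by
  classical
  by_cases hv : x ∈ orbit G v
  · obtain ⟨g, rfl⟩ := mem_orbit_iff.mp hv
    rw [orbitSwap_smul h.symm, orbitSwap_smul h]
  by_cases hu : x ∈ orbit G u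
  · obtain ⟨g, rfl⟩ := mem_orbit_iff.mp hu
    have hgv : g • v ∉ orbit G u := fun h' =>
      hv ((orbit_eq_iff.mpr ((smul_mem_orbit_iff g).mp h')).symm ▸ mem_orbit u g)
    have h₁ : orbitSwap G v u (g • u) = g • v := by
      rw [orbitSwap, Set.piecewise_eq_of_notMem _ _ _ hv, orbitMap_smul h.le]
    have h₂ : orbitSwap G u v (g • v) = g • u := by
      rw [orbitSwap, Set.piecewise_eq_of_notMem _ _ _ hgv, orbitMap_smul h.ge]
    rw [h₁, h₂]
  · rw [orbitSwap_of_notMem hv hu, orbitSwap_of_notMem hu hv]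

lemma exists_mem_gAut_swap {u v : X} (h : stabilizer G u = stabilizer G v) :
    ∃ e ∈ gAut G X, e u = v ∧ ∀ x, x ∉ orbit G u → x ∉ orbit G v → e x = x := by
  classical
  let e : Equiv.Perm X :=
    ⟨orbitSwap G u v, orbitSwap G v u, orbitSwap_orbitSwap h.symm, orbitSwap_orbitSwap h⟩
  refine ⟨e, piecewise_orbit_mem_gEnd u (orbitMap_mem_gEnd h.le) (orbitMap_mem_gEnd h.ge), ?_,
    fun x => orbitSwap_of_notMem⟩
  simpa [e] using orbitSwap_smul h (1 : G)

lemma exists_mem_gAut_apply_eq_apply_eq {u₁ u₂ v₁ v₂ : X}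
    (hu : u₂ ∉ orbit G u₁) (hv : v₂ ∉ orbit G v₁)
    (h₁ : stabilizer G u₁ = stabilizer G v₁) (h₂ : stabilizer G u₂ = stabilizer G v₂) :
    ∃ e ∈ gAut G X, e u₁ = v₁ ∧ e u₂ = v₂ := by
  obtain ⟨s, hs, hsu, -⟩ := exists_mem_gAut_swap h₁
  obtain ⟨t, ht, htu, htfix⟩ :=
    exists_mem_gAut_swap ((stabilizer_apply_of_mem_gAut hs u₂).trans h₂)
  refine ⟨t * s, mul_mem ht hs, ?_, htu⟩
  rw [Equiv.Perm.mul_apply, hsu]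
  refine htfix v₁ (fun h => hu ?_) (fun h => hv (mem_orbit_symm.mp h))
  obtain ⟨g, hg⟩ := mem_orbit_iff.mp h
  rw [← hsu, ← hs] at hg
  exact mem_orbit_iff.mpr ⟨g⁻¹, by rw [← s.injective hg, inv_smul_smul]⟩

end OrbitSwap

lemma relRank_le_natCard {M ι : Type*} [Monoid M] [Finite ι] {T : Submonoid M} {N : Set M}
    (φ : ι → M) (h : Submonoid.closure (Set.range φ ∪ N) = T) :
    relRank T N ≤ Nat.card ι := by
  classical
  have := Fintype.ofFinite ι
  calc relRank T N ≤ (Finset.univ.image φ).card :=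
        Nat.sInf_le ⟨_, rfl, by rwa [Finset.coe_image, Finset.coe_univ, Set.image_univ]⟩
    _ ≤ Nat.card ι := Nat.card_eq_fintype_card (α := ι) ▸ Finset.card_image_le

section Generation

variable {G X : Type*} [Group G] [MulAction G X]

/-- A non-surjective equivariant `f` misses a whole orbit `G • y`; making `f` the identity on
that orbit and composing with `orbitMap G y (f y)` gives back `f`, and the new map has fewer
non-fixed points. -/
lemma gEnd_le_of_orbitMap_mem [Finite X] {S : Submonoid (Function.End X)}
    (haut : autSet G X ⊆ S)
    (horb : ∀ y q : X, q ∉ orbit G y → stabilizer G y ≤ stabilizer G q →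
      orbitMap G y q ∈ S) :
    gEnd G X ≤ S := by
  classical
  suffices ∀ n, ∀ f : X → X, f ∈ gEnd G X → {x | f x ≠ x}.ncard = n → f ∈ S from
    fun f hf => this _ f hf rfl
  intro n
  induction n using Nat.strong_induction_on with
  | _ n ih =>
  intro f hf hn
  by_cases hb : Function.Bijective f
  · exact haut (mem_autSet_of_bijective hf hb)
  obtain ⟨y, hy⟩ : ∃ y, ∀ x, f x ≠ y := by
    simpa [Function.Surjective] using mt Finite.surjective_iff_bijective.mp hb
  have hmiss : ∀ x, f x ∉ orbit G y := fun x hx => by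
    obtain ⟨g, hg⟩ := mem_orbit_iff.mp hx
    exact hy (g⁻¹ • x) (by rw [hf, ← hg, inv_smul_smul])
  set f' : X → X := (orbit G y).piecewise id f
  have hf' : f' ∈ gEnd G X := piecewise_orbit_mem_gEnd y (fun _ _ => rfl) hf
  have hf'_in : ∀ x ∈ orbit G y, f' x = x := fun x hx => Set.piecewise_eq_of_mem _ _ _ hx
  have hf'_out : ∀ x ∉ orbit G y, f' x = f x := fun x hx => Set.piecewise_eq_of_notMem _ _ _ hx
  have hfactor : f = orbitMap G y (f y) ∘ f' := by
    funext x
    by_cases hx : x ∈ orbit G y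
    · obtain ⟨g, rfl⟩ := mem_orbit_iff.mp hx
      rw [Function.comp_apply, hf'_in _ hx,
        orbitMap_smul (stabilizer_le_stabilizer_apply hf y), hf]
    · rw [Function.comp_apply, hf'_out x hx, orbitMap_of_notMem (hmiss x)]
  have hlt : {x | f' x ≠ x}.ncard < n := by
    refine hn ▸ Set.ncard_lt_ncard ⟨fun x hx => ?_, fun hsub => ?_⟩
    · by_cases hxy : x ∈ orbit G y
      · exact absurd (hf'_in x hxy) hx
      · exact fun h => hx ((hf'_out x hxy).trans h)
    · have hy' : f y ≠ y := fun h => hmiss y (by rw [h]; exact mem_orbit_self y)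
      exact hsub hy' (hf'_in y (mem_orbit_self y))
  rw [hfactor]
  exact mul_mem (horb y (f y) (hmiss y) (stabilizer_le_stabilizer_apply hf y))
    (ih _ hlt f' hf' rfl)

lemma closure_union_autSet_eq_gEnd [Finite X] {T : Set (Function.End X)} (hT : T ⊆ gEnd G X)
    (hconj : ∀ y q : X, q ∉ orbit G y → stabilizer G y ≤ stabilizer G q →
      ∃ e ∈ gAut G X, ∃ t ∈ T, orbitMap G y q = ⇑e⁻¹ ∘ t ∘ ⇑e) :
    Submonoid.closure (T ∪ autSet G X) = gEnd G X := by
  refine le_antisymm (Submonoid.closure_le.mpr (Set.union_subset hT autSet_subset_gEnd)) ?_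
  refine gEnd_le_of_orbitMap_mem (fun f hf => Submonoid.subset_closure (Or.inr hf)) ?_
  intro y q hqy hle
  obtain ⟨e, he, t, ht, h⟩ := hconj y q hqy hle
  have haut : ∀ {e}, e ∈ gAut G X →
      (⇑e : Function.End X) ∈ Submonoid.closure (T ∪ autSet G X) :=
    fun he => Submonoid.subset_closure (Or.inr (mem_autSet_of_mem_gAut he))
  rw [h]
  exact mul_mem (haut (inv_mem he)) (mul_mem (Submonoid.subset_closure (Or.inl ht)) (haut he))

end Generation

lemma Set.exists_ne_of_ncard_ne_one {α : Type*} {s : Set α} {a : α} (ha : a ∈ s)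
    (hs : s.ncard ≠ 1) : ∃ b ∈ s, b ≠ a := by
  by_contra! h
  exact hs (Set.ncard_eq_one.mpr ⟨a, Set.eq_singleton_iff_unique_mem.mpr ⟨ha, h⟩⟩)

section Counting

variable {G X : Type*} [Group G] [MulAction G X]

/-- The classes of `U(H)` that need their own generator: all of them, except `[H]` itself when
`H` is the stabilizer type of a single orbit. -/
def stabUEssential (G X : Type*) [Group G] [MulAction G X] (H : Subgroup G) :
    Set (Set (Subgroup G)) :=
  {C ∈ stabU G X H |
    C = nConjClass (Subgroup.normalizer (H : Set G)) H → (classOrbits G X H).ncard ≠ 1}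

lemma orbit_mem_classOrbits {H : Subgroup G} {y : X} (hy : stabilizer G y = H) :
    orbit G y ∈ classOrbits G X H :=
  ⟨y, ⟨1, by rw [hy, conjSub_one]⟩, rfl⟩

lemma stabU_finite [Finite X] (H : Subgroup G) : (stabU G X H).Finite :=
  (Set.finite_range fun x : X =>
    nConjClass (Subgroup.normalizer (H : Set G)) (stabilizer G x)).subset
      (by rintro _ ⟨x, -, rfl⟩; exact ⟨x, rfl⟩)

lemma ncard_stabUEssential_add [Finite X] {H : Subgroup G} (hH : ∃ x : X, stabilizer G x = H) :
    (stabUEssential G X H).ncard + (if (classOrbits G X H).ncard = 1 then 1 else 0) =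
      (stabU G X H).ncard := by
  obtain ⟨x, hx⟩ := hH
  have hmem : nConjClass (Subgroup.normalizer (H : Set G)) H ∈ stabU G X H :=
    ⟨x, hx.ge, by rw [hx]⟩
  split_ifs with hκ
  · have : stabUEssential G X H =
        stabU G X H \ {nConjClass (Subgroup.normalizer (H : Set G)) H} := by
      ext C
      simp [stabUEssential, hκ]
    rw [this, Set.ncard_sdiff_singleton_add_one hmem (stabU_finite H)]
  · have : stabUEssential G X H = stabU G X H := by
      ext C
      simp [stabUEssential, hκ]
    rw [this, add_zero]

lemma sum_ncard_stabUEssential [Finite X] {ι : Type*} [Fintype ι] {H : ι → Subgroup G}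
    (hH : ∀ i, ∃ x : X, stabilizer G x = H i) :
    ∑ i, (stabUEssential G X (H i)).ncard =
      (∑ i, (stabU G X (H i)).ncard) - {i | (classOrbits G X (H i)).ncard = 1}.ncard := by
  classical
  simp only [← fun i => ncard_stabUEssential_add (hH i), Finset.sum_add_distrib, Finset.sum_boole,
    Nat.cast_id, Set.ncard_eq_toFinset_card', Set.toFinset_ofPred, Nat.add_sub_cancel]

end Counting

section Targets

variable {G X : Type*} [Group G] [MulAction G X]

lemma exists_target [Finite G] {H : Subgroup G} {x₀ : X} (hx₀ : stabilizer G x₀ = H)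
    {C : Set (Subgroup G)} (hC : C ∈ stabUEssential G X H) :
    ∃ z : X, H ≤ stabilizer G z ∧ z ∉ orbit G x₀ ∧
      nConjClass (Subgroup.normalizer (H : Set G)) (stabilizer G z) = C := by
  obtain ⟨⟨q, hHq, rfl⟩, hκ⟩ := hC
  by_cases hq : q ∈ orbit G x₀
  -- then `C = [H]`, and a second orbit of type `[H]` supplies `z`
  · obtain ⟨g, rfl⟩ := mem_orbit_iff.mp hq
    have hstab : stabilizer G (g • x₀) = H := by
      rw [stabilizer_smul, hx₀] at hHq ⊢
      exact conjSub_eq_self_of_le hHq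
    rw [hstab] at hκ ⊢
    obtain ⟨_, ⟨y, ⟨c, hc⟩, rfl⟩, hne⟩ :=
      Set.exists_ne_of_ncard_ne_one (orbit_mem_classOrbits hx₀) (hκ rfl)
    have hstab' : stabilizer G (c⁻¹ • y) = H := by
      rw [stabilizer_smul, hc, conjSub_conjSub, inv_mul_cancel, conjSub_one]
    refine ⟨c⁻¹ • y, hstab'.ge, fun h => hne ?_, by rw [hstab']⟩
    rw [← orbit_eq_iff.mpr h, orbit_smul]
  · exact ⟨q, hHq, hq, rfl⟩

lemma nConjClass_mem_stabUEssential {H : Subgroup G} {y q : X} (hy : stabilizer G y = H)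
    (hle : stabilizer G y ≤ stabilizer G q) (hqy : q ∉ orbit G y) :
    nConjClass (Subgroup.normalizer (H : Set G)) (stabilizer G q) ∈ stabUEssential G X H := by
  refine ⟨⟨q, hy ▸ hle, rfl⟩, fun hC hκ => ?_⟩
  obtain ⟨n, hn, hq⟩ := hC ▸ mem_nConjClass_self _ (stabilizer G q)
  rw [conjSub_eq_self_of_mem_normalizer hn] at hq
  obtain ⟨o, ho⟩ := Set.ncard_eq_one.mp hκ
  have hyo := orbit_mem_classOrbits (X := X) hy
  have hqo := orbit_mem_classOrbits (X := X) hq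
  rw [ho, Set.mem_singleton_iff] at hyo hqo
  exact hqy (orbit_eq_iff.mp (hqo.trans hyo.symm))

/-- `C` is the `N_G(H)`-class of `stabilizer G (c⁻¹ • q)`, where `c⁻¹ • y` has stabilizer
exactly `H`; writing that stabilizer as `n`-conjugate to the one of `z C`, the conjugating
permutation sends `y, q` to `(c * n) • x₀, (c * n) • z C`. -/
lemma exists_orbitMap_eq_conj {H : Subgroup G} {x₀ : X} (hx₀ : stabilizer G x₀ = H)
    {z : stabUEssential G X H → X}
    (hz : ∀ C, H ≤ stabilizer G (z C) ∧ z C ∉ orbit G x₀ ∧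
      nConjClass (Subgroup.normalizer (H : Set G)) (stabilizer G (z C)) = C)
    {y q : X} {c : G} (hyc : stabilizer G y = conjSub c H) (hqy : q ∉ orbit G y)
    (hle : stabilizer G y ≤ stabilizer G q) :
    ∃ e ∈ gAut G X, ∃ C, orbitMap G y q = ⇑e⁻¹ ∘ orbitMap G x₀ (z C) ∘ ⇑e := by
  have hy₁ : stabilizer G (c⁻¹ • y) = H := by
    rw [stabilizer_smul, hyc, conjSub_conjSub, inv_mul_cancel, conjSub_one]
  have hle₁ : stabilizer G (c⁻¹ • y) ≤ stabilizer G (c⁻¹ • q) := by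
    rw [stabilizer_smul, stabilizer_smul]
    exact Subgroup.map_mono hle
  have hqy₁ : c⁻¹ • q ∉ orbit G (c⁻¹ • y) := by rwa [orbit_smul, smul_mem_orbit_iff]
  set C : stabUEssential G X H := ⟨_, nConjClass_mem_stabUEssential hy₁ hle₁ hqy₁⟩
  obtain ⟨hHz, hzx, hzC⟩ := hz C
  obtain ⟨n, hn, hqn⟩ : stabilizer G (c⁻¹ • q) ∈
      nConjClass (Subgroup.normalizer (H : Set G)) (stabilizer G (z C)) := by
    rw [hzC]
    exact mem_nConjClass_self _ _
  obtain ⟨e, he, hey, heq⟩ := exists_mem_gAut_apply_eq_apply_eq (v₁ := (c * n) • x₀)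
    (v₂ := (c * n) • z C) hqy (by rwa [orbit_smul, smul_mem_orbit_iff])
    (by rw [stabilizer_smul, ← conjSub_conjSub, hx₀, conjSub_eq_self_of_mem_normalizer hn, hyc])
    (by rw [stabilizer_smul, ← conjSub_conjSub, ← hqn, ← stabilizer_smul, smul_inv_smul])
  refine ⟨e, he, C, ?_⟩
  rw [orbitMap_conj he hle, hey, heq, orbitMap_smul_smul (hx₀ ▸ hHz)]

end Targets

/-- `Rank(End_G(X) : Aut_G(X)) ≤ Σᵢ |U(Hᵢ)| − κ_G(X)`. -/
theorem stmt12 {G X : Type*} [Group G] [MulAction G X] [Finite G] [Finite X]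
    (r : ℕ) (H : Fin r → Subgroup G)
    (hH1 : ∀ i, ∃ x : X, MulAction.stabilizer G x = H i)
    (hH2 : ∀ x : X, ∃! i, ∃ g : G, MulAction.stabilizer G x = conjSub g (H i))
    :
    relRank (gEnd G X) (autSet G X) ≤
      (∑ i, (stabU G X (H i)).ncard) -
      Set.ncard {i : Fin r | (classOrbits G X (H i)).ncard = 1} := by
  choose x₀ hx₀ using hH1
  have : ∀ i, Finite (stabUEssential G X (H i)) :=
    fun i => ((stabU_finite (H i)).subset fun _ hC => hC.1).to_subtype
  choose z hz using fun i (C : stabUEssential G X (H i)) => exists_target (hx₀ i) C.2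
  let gen : (Σ i, stabUEssential G X (H i)) → Function.End X := fun p =>
    orbitMap G (x₀ p.1) (z p.1 p.2)
  have hgen : Submonoid.closure (Set.range gen ∪ autSet G X) = gEnd G X := by
    refine closure_union_autSet_eq_gEnd ?_ fun y q hqy hle => ?_
    · rintro _ ⟨⟨i, C⟩, rfl⟩
      exact orbitMap_mem_gEnd ((hx₀ i).trans_le (hz i C).1)
    · obtain ⟨i, c, hc⟩ := (hH2 y).exists
      obtain ⟨e, he, C, h⟩ := exists_orbitMap_eq_conj (hx₀ i) (hz i) hc hqy hle
      exact ⟨e, he, _, ⟨⟨i, C⟩, rfl⟩, h⟩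
  calc relRank (gEnd G X) (autSet G X) ≤ Nat.card (Σ i, stabUEssential G X (H i)) :=
        relRank_le_natCard _ hgen
    _ = ∑ i, (stabUEssential G X (H i)).ncard := by
        simp only [Nat.card_sigma, Nat.card_coe_set_eq]
    _ = _ := sum_ncard_stabUEssential fun i => ⟨x₀ i, hx₀ i⟩
end
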